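/- arXiv:2506.23037 — 2 statements merged into one kernel-verified Lean document; each statement's English description precedes it below -/
import Mathlib

section
/- With notation as in the context, assume moreover that T is finite. Then β̃ is nondegenerate if and only if T has exactly one parity element; in that case the unique parity element t_p satisfies t_p² = e. Furthermore: (1) if β is nondegenerate, then β̃ is nondegenerate, t_p ∈ T⁺, and rad β⁺ = ⟨t_p⟩; (2) if β is degenerate, then β̃ is nondegenerate if and only if β⁺ is nondegenerate, and in this case t_p ∈ T⁻ and rad β = ⟨t_p⟩. -/
/-!
Since `β` is alternating, `β̃(t, t) = (-1)^{p(t)}`, so `rad β̃ = rad β ∩ T⁺`. The parity elements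
are the preimage of the character `s ↦ (-1)^{p(s)}` under the homomorphism `t ↦ β̃(t, ·)`, hence a
coset of `rad β̃`. If `β̃` is nondegenerate this homomorphism is injective, and by Dedekind's
independence of characters `T` has at most `|T|` characters into `Fˣ`, so it is bijective and a
parity element exists. For `t ∈ rad β⁺ \ rad β`, the character `β(t, ·)` is trivial on `T⁺` and
nontrivial, so it equals `(-1)^p`: thus `rad β⁺ ⊆ rad β ∪ {parity elements}`, while on `T⁻` the
parity elements are exactly the elements of `rad β`. Both (1) and (2) follow by comparing these sets.
-/

/-- The skew-symmetric bicharacter `β̃(t,s) = (−1)^{p(t)p(s)} β(t,s)`. -/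
def btilde {F T : Type*} [Field F] [CommGroup T]
    (β : T → T → Fˣ) (p : T → ZMod 2) : T → T → Fˣ :=
  fun t s => (-1 : Fˣ) ^ ((p t).val * (p s).val) * β t s

/-- The set of parity elements: those `t_p ∈ T` with `β̃(t_p, t) = (−1)^{p(t)}` for all `t`. -/
def paritySet {F T : Type*} [Field F] [CommGroup T]
    (β : T → T → Fˣ) (p : T → ZMod 2) : Set T :=
  {tp | ∀ t, btilde β p tp t = (-1 : Fˣ) ^ (p t).val}

/-- The radical of `β⁺` (the restriction of `β` to `T⁺ × T⁺`), computed inside `T⁺`. -/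
def radPlus {F T : Type*} [Field F] [CommGroup T]
    (β : T → T → Fˣ) (p : T → ZMod 2) : Set T :=
  {t | p t = 0 ∧ ∀ s, p s = 0 → β t s = 1}

open Function Subgroup

lemma ZMod.eq_zero_or_eq_one_of_two (x : ZMod 2) : x = 0 ∨ x = 1 := by
  revert x
  decide

lemma neg_one_pow_val_add {M : Type*} [Monoid M] [HasDistribNeg M] (x y : ZMod 2) :
    (-1 : M) ^ (x + y).val = (-1) ^ x.val * (-1) ^ y.val := by
  rw [ZMod.val_add, ← pow_add, ← pow_eq_pow_mod _ neg_one_sq]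

lemma neg_one_pow_val_mul_self {M : Type*} [Monoid M] [HasDistribNeg M] (x : ZMod 2) :
    (-1 : M) ^ (x.val * x.val) = (-1) ^ x.val := by
  fin_cases x <;> simp [ZMod.val]

lemma Units.neg_one_ne_one_of_two_ne_zero {R : Type*} [Ring R] (h2 : (2 : R) ≠ 0) :
    (-1 : Rˣ) ≠ 1 := by
  intro h
  apply h2
  rw [← one_add_one_eq_two, ← neg_eq_iff_add_eq_zero]
  simpa using Units.ext_iff.mp h

lemma Units.eq_one_or_eq_neg_one_of_mul_self {R : Type*} [Ring R] [NoZeroDivisors R] {u : Rˣ}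
    (h : u * u = 1) : u = 1 ∨ u = -1 := by
  have hval : (u : R) * u = 1 := by rw [← Units.val_mul, h, Units.val_one]
  rcases mul_self_eq_one_iff.mp hval with h1 | h1
  exacts [.inl (Units.ext h1), .inr (Units.ext (by simpa using h1))]

lemma MonoidHom.injective_of_existsUnique {G H : Type*} [Group G] [MulOneClass H] (f : G →* H)
    {y : H} (h : ∃! x, f x = y) : Injective f := by
  obtain ⟨x₀, rfl, hx₀⟩ := h
  refine (injective_iff_map_eq_one f).mpr fun x hx => ?_
  simpa using hx₀ (x₀ * x) (by simp [hx])

lemma Subgroup.coe_zpowers_of_sq_eq_one {G : Type*} [Group G] {g : G} (hg : g ^ 2 = 1) :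
    (zpowers g : Set G) = {1, g} := by
  ext x
  constructor
  · rintro ⟨k, rfl⟩
    obtain ⟨m, rfl | rfl⟩ := Int.even_or_odd' k <;>
      simp [zpow_add, zpow_mul, hg]
  · rintro (rfl | rfl)
    exacts [one_mem _, mem_zpowers _]

section Dedekind

variable {G F : Type*} [Monoid G] [Field F]

lemma linearIndependent_monoidHom_units :
    LinearIndependent F (fun f : G →* Fˣ => ((↑) ∘ f : G → F)) :=
  (linearIndependent_monoidHom G F).comp (fun f => (Units.coeHom F).comp f)
    fun _ _ h => MonoidHom.ext fun g => Units.ext (DFunLike.congr_fun h g)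

lemma natCard_monoidHom_units_le [Fintype G] : Nat.card (G →* Fˣ) ≤ Nat.card G := by
  have hli := linearIndependent_monoidHom_units (G := G) (F := F)
  have := hli.finite
  have h := hli.cardinalMk_le_finrank
  rw [Module.finrank_fintype_fun_eq_card, ← Nat.cast_card, ← Nat.card_eq_fintype_card] at h
  exact_mod_cast h

lemma surjective_of_injective_to_monoidHom_units [Fintype G] {f : G → (G →* Fˣ)}
    (hf : Injective f) : Surjective f :=
  have := (linearIndependent_monoidHom_units (G := G) (F := F)).finite
  (hf.bijective_of_nat_card_le natCard_monoidHom_units_le).2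

end Dedekind

section Bicharacter

variable {T G : Type*} [CommGroup T] [CommGroup G]

structure IsBicharacter (β : T → T → G) : Prop where
  map_mul_left : ∀ t t' s, β (t * t') s = β t s * β t' s
  map_mul_right : ∀ t s s', β t (s * s') = β t s * β t s'

def rad (β : T → T → G) : Set T := {t | ∀ s, β t s = 1}

variable {β : T → T → G}

def IsBicharacter.toHom (hβ : IsBicharacter β) : T →* T →* G :=
  MonoidHom.mk' (fun t => MonoidHom.mk' (β t) (hβ.map_mul_right t)) fun t t' =>
    MonoidHom.ext (hβ.map_mul_left t t')

@[simp]
lemma IsBicharacter.toHom_apply (hβ : IsBicharacter β) (t s : T) : hβ.toHom t s = β t s := rfl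

lemma IsBicharacter.one_mem_rad (hβ : IsBicharacter β) : (1 : T) ∈ rad β := fun s => by
  rw [← hβ.toHom_apply, map_one, MonoidHom.one_apply]

lemma IsBicharacter.rad_eq_singleton_iff (hβ : IsBicharacter β) :
    rad β = {1} ↔ Injective hβ.toHom := by
  have : rad β = hβ.toHom.ker := by
    ext
    simp [rad, MonoidHom.mem_ker, DFunLike.ext_iff]
  rw [this, ← MonoidHom.ker_eq_bot_iff, ← coe_bot, SetLike.coe_set_eq]

end Bicharacter

section Parity

variable {F T : Type*} [Field F] [CommGroup T] {β : T → T → Fˣ} {p : T → ZMod 2} {t tp : T}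

lemma map_one_eq_zero (hp : ∀ a b, p (a * b) = p a + p b) : p 1 = 0 :=
  left_eq_add.mp ((congrArg p (mul_one 1)).symm.trans (hp 1 1))

lemma IsBicharacter.btilde (hβ : IsBicharacter β) (hp : ∀ a b, p (a * b) = p a + p b) :
    IsBicharacter (btilde β p) where
  map_mul_left t t' s := by
    simp only [_root_.btilde, hβ.map_mul_left, hp, pow_mul, neg_one_pow_val_add, mul_pow]
    exact mul_mul_mul_comm ..
  map_mul_right t s s' := by
    simp only [_root_.btilde, hβ.map_mul_right, hp, pow_mul', neg_one_pow_val_add, mul_pow]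
    exact mul_mul_mul_comm ..

variable (F) in
def signChar (hp : ∀ a b, p (a * b) = p a + p b) : T →* Fˣ :=
  MonoidHom.mk' (fun s => (-1) ^ (p s).val) fun a b => by rw [hp, neg_one_pow_val_add]

lemma btilde_of_eq_zero (h : p t = 0) (s : T) : btilde β p t s = β t s := by
  simp [btilde, h]

lemma btilde_of_eq_one (h : p t = 1) (s : T) : btilde β p t s = (-1) ^ (p s).val * β t s := by
  simp [btilde, h, ZMod.val_one]

lemma btilde_self (halt : ∀ t, β t t = 1) (t : T) : btilde β p t t = (-1) ^ (p t).val := by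
  rw [btilde, halt, mul_one, neg_one_pow_val_mul_self]

lemma mem_paritySet_iff_toHom_eq (hβ : IsBicharacter β) (hp : ∀ a b, p (a * b) = p a + p b) :
    tp ∈ paritySet β p ↔ (hβ.btilde hp).toHom tp = signChar F hp := by
  simp [paritySet, DFunLike.ext_iff, signChar]

lemma eq_of_mem_paritySet (hβ : IsBicharacter β) (hp : ∀ a b, p (a * b) = p a + p b)
    (hrad : rad (btilde β p) = {1}) {a b : T} (ha : a ∈ paritySet β p) (hb : b ∈ paritySet β p) :
    a = b :=
  (hβ.btilde hp).rad_eq_singleton_iff.mp hrad <|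
    ((mem_paritySet_iff_toHom_eq hβ hp).mp ha).trans ((mem_paritySet_iff_toHom_eq hβ hp).mp hb).symm

lemma existsUnique_mem_paritySet_iff [Fintype T] (hβ : IsBicharacter β)
    (hp : ∀ a b, p (a * b) = p a + p b) :
    (∃! tp, tp ∈ paritySet β p) ↔ rad (btilde β p) = {1} := by
  simp_rw [mem_paritySet_iff_toHom_eq hβ hp, (hβ.btilde hp).rad_eq_singleton_iff]
  refine ⟨MonoidHom.injective_of_existsUnique _, fun hinj => ?_⟩
  obtain ⟨tp, htp⟩ := surjective_of_injective_to_monoidHom_units hinj (signChar F hp)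
  exact ⟨tp, htp, fun y hy => hinj (hy.trans htp.symm)⟩

lemma sq_eq_one_of_mem_paritySet (hβ : IsBicharacter β) (hp : ∀ a b, p (a * b) = p a + p b)
    (hrad : rad (btilde β p) = {1}) (htp : tp ∈ paritySet β p) : tp ^ 2 = 1 := by
  have hsq : tp ^ 2 ∈ rad (btilde β p) := fun s => by
    rw [sq, (hβ.btilde hp).map_mul_left, htp s, ← sq, ← pow_mul', pow_mul, neg_one_sq, one_pow]
  simpa [hrad] using hsq

lemma mem_rad_btilde_iff (h2 : (2 : F) ≠ 0) (halt : ∀ t, β t t = 1) :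
    t ∈ rad (btilde β p) ↔ p t = 0 ∧ t ∈ rad β := by
  refine ⟨fun ht => ?_, fun ⟨hpt, ht⟩ s => (btilde_of_eq_zero hpt s).trans (ht s)⟩
  have hpt : p t = 0 := (ZMod.eq_zero_or_eq_one_of_two _).resolve_right fun h1 =>
    Units.neg_one_ne_one_of_two_ne_zero h2 (by simpa [btilde_self halt, h1, ZMod.val_one] using ht t)
  exact ⟨hpt, fun s => (btilde_of_eq_zero hpt s).symm.trans (ht s)⟩

lemma rad_btilde_subset_radPlus (h2 : (2 : F) ≠ 0) (halt : ∀ t, β t t = 1) :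
    rad (btilde β p) ⊆ radPlus β p := fun _ ht =>
  have ht := (mem_rad_btilde_iff h2 halt).mp ht
  ⟨ht.1, fun s _ => ht.2 s⟩

lemma mem_paritySet_iff_mem_rad_of_eq_one (h : p t = 1) : t ∈ paritySet β p ↔ t ∈ rad β := by
  simp only [paritySet, rad, Set.mem_ofPred_eq, btilde_of_eq_one h, mul_eq_left]

lemma mem_radPlus_of_mem_paritySet (h : p t = 0) (ht : t ∈ paritySet β p) : t ∈ radPlus β p :=
  ⟨h, fun s hs => by simpa [btilde_of_eq_zero h, hs] using ht s⟩

lemma mem_rad_or_mem_paritySet_of_mem_radPlus (hβ : IsBicharacter β)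
    (hp : ∀ a b, p (a * b) = p a + p b) (ht : t ∈ radPlus β p) :
    t ∈ rad β ∨ t ∈ paritySet β p := by
  obtain ⟨hpt, hplus⟩ := ht
  by_cases htrad : t ∈ rad β
  · exact .inl htrad
  obtain ⟨s₀, hs₀⟩ : ∃ s₀, β t s₀ ≠ 1 := by simpa [rad] using htrad
  have hps₀ : p s₀ = 1 :=
    (ZMod.eq_zero_or_eq_one_of_two _).resolve_left fun h => hs₀ (hplus s₀ h)
  have hmul : ∀ s, p s = 1 → β t s * β t s₀ = 1 := fun s hs => by
    rw [← hβ.map_mul_right]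
    exact hplus _ (by rw [hp, hs, hps₀]; rfl)
  have hneg : β t s₀ = -1 :=
    (Units.eq_one_or_eq_neg_one_of_mul_self (hmul s₀ hps₀)).resolve_left hs₀
  refine .inr fun s => ?_
  rw [btilde_of_eq_zero hpt]
  rcases ZMod.eq_zero_or_eq_one_of_two (p s) with hs | hs
  · simp [hplus s hs, hs]
  · have := hmul s hs
    rw [hneg, mul_neg_one, neg_eq_iff_eq_neg] at this
    simp [this, hs, ZMod.val_one]

end Parity

section Radicals

variable {F T : Type*} [Field F] [CommGroup T] {β : T → T → Fˣ} {p : T → ZMod 2} {tp : T}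

lemma one_mem_radPlus (hβ : IsBicharacter β) (hp : ∀ a b, p (a * b) = p a + p b) :
    (1 : T) ∈ radPlus β p :=
  ⟨map_one_eq_zero hp, fun s _ => hβ.one_mem_rad s⟩

lemma rad_btilde_eq_singleton_of_rad_eq_singleton (hβ : IsBicharacter β)
    (hp : ∀ a b, p (a * b) = p a + p b) (h2 : (2 : F) ≠ 0) (halt : ∀ t, β t t = 1)
    (hR : rad β = {1}) : rad (btilde β p) = {1} :=
  (Set.Nonempty.subset_singleton_iff ⟨1, (hβ.btilde hp).one_mem_rad⟩).mp
    (hR ▸ fun _ ht => ((mem_rad_btilde_iff h2 halt).mp ht).2)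

lemma map_eq_zero_of_mem_paritySet (hp : ∀ a b, p (a * b) = p a + p b) (hR : rad β = {1})
    (htp : tp ∈ paritySet β p) : p tp = 0 := by
  refine (ZMod.eq_zero_or_eq_one_of_two _).resolve_right fun h => ?_
  have htp1 : tp = 1 := by simpa [hR] using (mem_paritySet_iff_mem_rad_of_eq_one h).mp htp
  simp [htp1, map_one_eq_zero hp] at h

lemma radPlus_eq_zpowers_of_rad_eq_singleton (hβ : IsBicharacter β)
    (hp : ∀ a b, p (a * b) = p a + p b) (h2 : (2 : F) ≠ 0) (halt : ∀ t, β t t = 1)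
    (hR : rad β = {1}) (htp : tp ∈ paritySet β p) : radPlus β p = zpowers tp := by
  have hrad := rad_btilde_eq_singleton_of_rad_eq_singleton hβ hp h2 halt hR
  rw [coe_zpowers_of_sq_eq_one (sq_eq_one_of_mem_paritySet hβ hp hrad htp)]
  ext x
  refine ⟨fun hx => ?_, ?_⟩
  · rcases mem_rad_or_mem_paritySet_of_mem_radPlus hβ hp hx with hx | hx
    · exact .inl (by simpa [hR] using hx)
    · exact .inr (eq_of_mem_paritySet hβ hp hrad hx htp)
  · rintro (rfl | rfl)
    exacts [one_mem_radPlus hβ hp,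
      mem_radPlus_of_mem_paritySet (map_eq_zero_of_mem_paritySet hp hR htp) htp]

lemma exists_mem_rad_map_eq_one (hβ : IsBicharacter β) (h2 : (2 : F) ≠ 0)
    (halt : ∀ t, β t t = 1) (hR : rad β ≠ {1}) (hrad : rad (btilde β p) = {1}) :
    ∃ r ∈ rad β, p r = 1 := by
  obtain ⟨r, hr, hr1⟩ : ∃ r ∈ rad β, r ≠ 1 := by
    contrapose! hR
    exact Set.eq_singleton_iff_unique_mem.mpr ⟨hβ.one_mem_rad, hR⟩
  refine ⟨r, hr, (ZMod.eq_zero_or_eq_one_of_two _).resolve_left fun h => hr1 ?_⟩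
  simpa [hrad] using (mem_rad_btilde_iff h2 halt).mpr ⟨h, hr⟩

lemma rad_btilde_eq_singleton_iff_radPlus_eq_singleton (hβ : IsBicharacter β)
    (hp : ∀ a b, p (a * b) = p a + p b) (h2 : (2 : F) ≠ 0) (halt : ∀ t, β t t = 1)
    (hR : rad β ≠ {1}) : rad (btilde β p) = {1} ↔ radPlus β p = {1} := by
  refine ⟨fun hrad => ?_, fun hplus =>
    (Set.Nonempty.subset_singleton_iff ⟨1, (hβ.btilde hp).one_mem_rad⟩).mp
      (hplus ▸ rad_btilde_subset_radPlus h2 halt)⟩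
  obtain ⟨r, hr, hpr⟩ := exists_mem_rad_map_eq_one hβ h2 halt hR hrad
  have hrP := (mem_paritySet_iff_mem_rad_of_eq_one hpr).mpr hr
  refine Set.eq_singleton_iff_unique_mem.mpr ⟨one_mem_radPlus hβ hp, fun x hx => ?_⟩
  rcases mem_rad_or_mem_paritySet_of_mem_radPlus hβ hp hx with hxR | hxP
  · simpa [hrad] using (mem_rad_btilde_iff h2 halt).mpr ⟨hx.1, hxR⟩
  · have hpx := hx.1
    rw [eq_of_mem_paritySet hβ hp hrad hxP hrP, hpr] at hpx
    exact absurd hpx one_ne_zero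

lemma map_eq_one_and_rad_eq_zpowers (hβ : IsBicharacter β) (hp : ∀ a b, p (a * b) = p a + p b)
    (h2 : (2 : F) ≠ 0) (halt : ∀ t, β t t = 1) (hR : rad β ≠ {1})
    (hrad : rad (btilde β p) = {1}) (htp : tp ∈ paritySet β p) :
    p tp = 1 ∧ rad β = zpowers tp := by
  obtain ⟨r, hr, hpr⟩ := exists_mem_rad_map_eq_one hβ h2 halt hR hrad
  obtain rfl : tp = r :=
    eq_of_mem_paritySet hβ hp hrad htp ((mem_paritySet_iff_mem_rad_of_eq_one hpr).mpr hr)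
  refine ⟨hpr, ?_⟩
  rw [coe_zpowers_of_sq_eq_one (sq_eq_one_of_mem_paritySet hβ hp hrad htp)]
  ext x
  refine ⟨fun hx => ?_, by rintro (rfl | rfl); exacts [hβ.one_mem_rad, hr]⟩
  rcases ZMod.eq_zero_or_eq_one_of_two (p x) with h | h
  · exact .inl (by simpa [hrad] using (mem_rad_btilde_iff h2 halt).mpr ⟨h, hx⟩)
  · exact .inr (eq_of_mem_paritySet hβ hp hrad
      ((mem_paritySet_iff_mem_rad_of_eq_one h).mpr hx) htp)

end Radicals

/-- For finite `T`: `β̃` is nondegenerate iff `T` has exactly one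
parity element; in that case the unique parity element `t_p` satisfies `t_p² = e`.
Furthermore: (1) if `β` is nondegenerate, then `β̃` is nondegenerate, `t_p ∈ T⁺`, and
`rad β⁺ = ⟨t_p⟩`; (2) if `β` is degenerate, then `β̃` is nondegenerate iff `β⁺` is
nondegenerate, and in this case `t_p ∈ T⁻` and `rad β = ⟨t_p⟩`. -/
theorem stmt_9 {F T : Type*} [Field F] (h2 : (2 : F) ≠ 0) [CommGroup T] [Fintype T]
    (β : T → T → Fˣ)
    (hβ1 : ∀ t s s', β t (s * s') = β t s * β t s')
    (hβ2 : ∀ t t' s, β (t * t') s = β t s * β t' s)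
    (halt : ∀ t, β t t = 1)
    (p : T → ZMod 2) (hp : ∀ a b, p (a * b) = p a + p b) :
    (({t : T | ∀ s, btilde β p t s = 1} = {1}) ↔ (∃! tp : T, tp ∈ paritySet β p)) ∧
    (({t : T | ∀ s, btilde β p t s = 1} = {1}) → ∀ tp ∈ paritySet β p, tp ^ 2 = 1) ∧
    (({t : T | ∀ s, β t s = 1} = {1}) →
      ({t : T | ∀ s, btilde β p t s = 1} = {1}) ∧
      ∀ tp ∈ paritySet β p, p tp = 0 ∧ radPlus β p = (Subgroup.zpowers tp : Set T)) ∧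
    (({t : T | ∀ s, β t s = 1} ≠ {1}) →
      (({t : T | ∀ s, btilde β p t s = 1} = {1}) ↔ radPlus β p = {1}) ∧
      (({t : T | ∀ s, btilde β p t s = 1} = {1}) →
        ∀ tp ∈ paritySet β p, p tp = 1 ∧
          {t : T | ∀ s, β t s = 1} = (Subgroup.zpowers tp : Set T))) := by
  have hβ : IsBicharacter β := ⟨hβ2, hβ1⟩
  refine ⟨(existsUnique_mem_paritySet_iff hβ hp).symm,
    fun hrad _ htp => sq_eq_one_of_mem_paritySet hβ hp hrad htp, fun hR => ?_, fun hR => ?_⟩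
  · exact ⟨rad_btilde_eq_singleton_of_rad_eq_singleton hβ hp h2 halt hR, fun _ htp =>
      ⟨map_eq_zero_of_mem_paritySet hp hR htp,
        radPlus_eq_zpowers_of_rad_eq_singleton hβ hp h2 halt hR htp⟩⟩
  · exact ⟨rad_btilde_eq_singleton_iff_radPlus_eq_singleton hβ hp h2 halt hR,
      fun hrad _ htp => map_eq_one_and_rad_eq_zpowers hβ hp h2 halt hR hrad htp⟩
end

section
/- With D, T, p, the elements X_t, and β̃ as in the context: D is simple as a superalgebra (i.e., its only superideals are 0 and D) if and only if β̃ is nondegenerate, i.e., rad β̃ = {e}. -/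
/-!
Write `γ(s, t)` for the commutation factors, `X_s X_t = γ(s, t) X_t X_s`. Since the homogeneous
components are lines, `γ` is a bicharacter with `γ(s, t) γ(t, s) = 1`, and conjugation by `X_s`
rescales the degree-`t` component of an element by `γ(s, t)`. A superideal is therefore stable
under rescaling the components by any function in the algebra generated by the characters
`γ(s, ·)` and the indicator of the even degrees. If `β̃` is nondegenerate these functions separate
the points of `T`, so they are all functions `T → F`: the superideal contains the homogeneous
components of its elements, and a nonzero one contains a unit.

Conversely, let `u ≠ 0` lie in the radical. If `u` is odd, `γ(u, u) = 1` forces `β̃(u, u) = -1`.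
If `u` is even, `X_u` is central; for an eigenvalue `μ` of `X_u` (here `F` is algebraically
closed and `D` is finite-dimensional), `(μ - X_u) D` is a proper nonzero superideal.
-/

open DirectSum Module

namespace GradedAlgebra

variable {ι R A : Type*} [DecidableEq ι] [AddMonoid ι] [Fintype ι] [CommRing R] [Ring A]
  [Algebra R A] (𝒜 : ι → Submodule R A) [GradedAlgebra 𝒜]

def componentScale (f : ι → R) : A →ₗ[R] A := ∑ i, f i • proj 𝒜 i

variable {𝒜}

theorem componentScale_apply (f : ι → R) (x : A) :
    componentScale 𝒜 f x = ∑ i, f i • (decompose 𝒜 x i : A) := by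
  simp [componentScale, proj_apply]

theorem componentScale_apply_of_mem (f : ι → R) {i : ι} {x : A} (hx : x ∈ 𝒜 i) :
    componentScale 𝒜 f x = f i • x := by
  rw [componentScale_apply, Finset.sum_eq_single i]
  · rw [decompose_of_mem_same 𝒜 hx]
  · intro j _ hj
    rw [decompose_of_mem_ne 𝒜 hx hj.symm, smul_zero]
  · simp

theorem componentScale_ite_apply (P : ι → Prop) [DecidablePred P] (x : A) :
    componentScale 𝒜 (fun i => if P i then 1 else 0) x =
      ∑ i, if P i then (decompose 𝒜 x i : A) else 0 := by
  simp [componentScale_apply, ite_smul]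

theorem componentScale_single (i : ι) : componentScale 𝒜 (Pi.single i 1) = proj 𝒜 i := by
  ext x
  rw [componentScale_apply, Finset.sum_eq_single i (fun j _ hj => by simp [hj]) (by simp)]
  simp [proj_apply]

theorem componentScale_mul (f g : ι → R) :
    componentScale 𝒜 (f * g) = componentScale 𝒜 f ∘ₗ componentScale 𝒜 g :=
  decompose_lhom_ext 𝒜 fun i => LinearMap.ext fun ⟨x, hx⟩ => by
    simp [componentScale_apply_of_mem _ hx,
      componentScale_apply_of_mem _ (Submodule.smul_mem _ (g i) hx), mul_smul]

theorem componentScale_add (f g : ι → R) :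
    componentScale 𝒜 (f + g) = componentScale 𝒜 f + componentScale 𝒜 g :=
  decompose_lhom_ext 𝒜 fun i => LinearMap.ext fun ⟨x, hx⟩ => by
    simp [componentScale_apply_of_mem _ hx, add_smul]

theorem componentScale_algebraMap (r : R) :
    componentScale 𝒜 (algebraMap R (ι → R) r) = r • LinearMap.id :=
  decompose_lhom_ext 𝒜 fun i => LinearMap.ext fun ⟨x, hx⟩ => by
    simp [componentScale_apply_of_mem _ hx]

theorem componentScale_mul_left_of_mem {f : ι → R} {j : ι} (hf : ∀ i, f (j + i) = f i)
    {a : A} (ha : a ∈ 𝒜 j) (x : A) :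
    componentScale 𝒜 f (a * x) = a * componentScale 𝒜 f x := by
  have : componentScale 𝒜 f ∘ₗ LinearMap.mulLeft R a =
      LinearMap.mulLeft R a ∘ₗ componentScale 𝒜 f :=
    decompose_lhom_ext 𝒜 fun i => LinearMap.ext fun ⟨y, hy⟩ => by
      simp [componentScale_apply_of_mem _ hy,
        componentScale_apply_of_mem _ (SetLike.mul_mem_graded ha hy), hf]
  exact LinearMap.congr_fun this x

variable (𝒜) in
def scaleStabilizer (I : Submodule R A) : Subalgebra R (ι → R) where
  carrier := {f | ∀ x ∈ I, componentScale 𝒜 f x ∈ I}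
  mul_mem' {f g} hf hg x hx := by
    rw [componentScale_mul]
    exact hf _ (hg x hx)
  add_mem' {f g} hf hg x hx := by
    rw [componentScale_add]
    exact I.add_mem (hf x hx) (hg x hx)
  algebraMap_mem' r x hx := by
    rw [componentScale_algebraMap]
    exact I.smul_mem r hx

theorem isHomogeneous_of_scaleStabilizer_eq_top {I : Submodule R A}
    (h : scaleStabilizer 𝒜 I = ⊤) : SetLike.IsHomogeneous 𝒜 I := fun i x hx => by
  have : Pi.single i 1 ∈ scaleStabilizer 𝒜 I := h ▸ Algebra.mem_top
  simpa [componentScale_single, proj_apply] using this x hx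

end GradedAlgebra

theorem Subalgebra.eq_top_of_separatesPoints {ι K : Type*} [Finite ι] [DecidableEq ι] [Field K]
    {S : Subalgebra K (ι → K)} (h : ∀ i j, i ≠ j → ∃ f ∈ S, f i ≠ f j) : S = ⊤ := by
  have := Fintype.ofFinite ι
  have hsingle : ∀ i, Pi.single i 1 ∈ S := by
    intro i
    choose! f hfS hf using h i
    -- each factor is `f j` rescaled to take the value `1` at `i` and `0` at `j`
    have : Pi.single i 1 = ∏ j ∈ Finset.univ.erase i,
        (f j i - f j j)⁻¹ • (f j - algebraMap K (ι → K) (f j j)) := by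
      ext k
      by_cases hk : k = i
      · subst hk
        simp only [Pi.single_eq_same, Finset.prod_apply, Pi.smul_apply, Pi.sub_apply,
          Pi.algebraMap_apply, Algebra.algebraMap_self, RingHom.id_apply, smul_eq_mul]
        exact (Finset.prod_eq_one fun j hj =>
          inv_mul_cancel₀ (sub_ne_zero.mpr (hf j (Finset.ne_of_mem_erase hj).symm))).symm
      · rw [Pi.single_eq_of_ne hk, Finset.prod_apply]
        exact (Finset.prod_eq_zero (Finset.mem_erase.mpr ⟨hk, Finset.mem_univ k⟩)
          (by simp)).symm
    rw [this]
    exact Subalgebra.prod_mem _ fun j hj =>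
      S.smul_mem (S.sub_mem (hfS j (Finset.ne_of_mem_erase hj).symm) (S.algebraMap_mem _)) _
  rw [eq_top_iff]
  intro g _
  rw [← Finset.univ_sum_single g]
  exact Subalgebra.sum_mem _ fun i _ => by
    simpa [← Pi.single_smul] using S.smul_mem (hsingle i) (g i)

theorem Submodule.exists_smul_eq_of_finrank_eq_one {K V : Type*} [DivisionRing K]
    [AddCommGroup V] [Module K V] {W : Submodule K V} (hW : finrank K W = 1) {v w : V}
    (hv : v ∈ W) (hv0 : v ≠ 0) (hw : w ∈ W) : ∃ a : K, a • v = w := by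
  obtain ⟨a, ha⟩ :=
    (finrank_eq_one_iff_of_nonzero' (⟨v, hv⟩ : W) (by simpa using hv0)).mp hW ⟨w, hw⟩
  exact ⟨a, congrArg Subtype.val ha⟩

theorem mul_eq_smul_mul_of_mem_of_finrank_eq_one {K A : Type*} [Field K] [Ring A] [Algebra K A]
    {W : Submodule K A} (hW : finrank K W = 1) {x y d : A} {a : K} (hy : y ∈ W) (hy0 : y ≠ 0)
    (hxy : x * y = a • (y * x)) (hd : d ∈ W) : x * d = a • (d * x) := by
  obtain ⟨b, rfl⟩ := W.exists_smul_eq_of_finrank_eq_one hW hy hy0 hd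
  rw [mul_smul_comm, hxy, smul_mul_assoc, smul_comm]

theorem DirectSum.Decomposition.finiteDimensional {K V ι : Type*} [Field K] [AddCommGroup V]
    [Module K V] [Finite ι] [DecidableEq ι] (𝒱 : ι → Submodule K V) [Decomposition 𝒱]
    [∀ i, FiniteDimensional K (𝒱 i)] : FiniteDimensional K V :=
  Module.Finite.equiv (decomposeLinearEquiv 𝒱).symm

theorem eq_top_of_isHomogeneous {F T D : Type*} [Field F] [AddMonoid T] [DecidableEq T]
    [Ring D] [Algebra F D] {𝒜 : T → Submodule F D} [GradedAlgebra 𝒜]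
    (hdiv : ∀ t, ∀ d ∈ 𝒜 t, d ≠ 0 → IsUnit d) {I : Submodule F D}
    (hI : ∀ r x, x ∈ I → r * x ∈ I) (hhom : SetLike.IsHomogeneous 𝒜 I) (hne : I ≠ ⊥) :
    I = ⊤ := by
  obtain ⟨x, hxI, hx0⟩ := Submodule.exists_mem_ne_zero_of_ne_bot hne
  obtain ⟨t, ht⟩ : ∃ t, (decompose 𝒜 x t : D) ≠ 0 := by
    by_contra! h
    have : decompose 𝒜 x = 0 := DFinsupp.ext fun t => Subtype.ext (h t)
    exact hx0 (by simpa using congrArg (decompose 𝒜).symm this)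
  obtain ⟨v, hv⟩ := hdiv t _ (decompose 𝒜 x t).2 ht
  have h1 : (1 : D) ∈ I := by simpa [← hv] using hI (↑v⁻¹) _ (hhom t hxI)
  exact eq_top_iff.mpr fun r _ => by simpa using hI r 1 h1

section CommutationFactor

variable {F T D : Type*} [Field F] [Ring D] [Algebra F D] [Nontrivial D] {X : T → D}
  {c : T → T → F}

theorem commFactor_mul_swap (hXu : ∀ t, IsUnit (X t))
    (hc : ∀ s t, X s * X t = c s t • (X t * X s)) (s t : T) : c s t * c t s = 1 := by
  refine smul_left_injective F ((hXu s).mul (hXu t)).ne_zero ?_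
  beta_reduce
  rw [one_smul, ← smul_smul, ← hc, ← hc]

theorem commFactor_self (hXu : ∀ t, IsUnit (X t))
    (hc : ∀ s t, X s * X t = c s t • (X t * X s)) (t : T) : c t t = 1 :=
  smul_left_injective F ((hXu t).mul (hXu t)).ne_zero ((hc t t).symm.trans (one_smul F _).symm)

variable [AddCommGroup T] [DecidableEq T] {𝒜 : T → Submodule F D} [GradedAlgebra 𝒜]

theorem commFactor_add_right (hdim : ∀ t, finrank F (𝒜 t) = 1) (hX : ∀ t, X t ∈ 𝒜 t)
    (hXu : ∀ t, IsUnit (X t)) (hc : ∀ s t, X s * X t = c s t • (X t * X s)) (s t t' : T) :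
    c s (t + t') = c s t * c s t' := by
  have h₁ : X s * (X t * X t') = c s (t + t') • (X t * X t' * X s) :=
    mul_eq_smul_mul_of_mem_of_finrank_eq_one (hdim _) (hX _) (hXu _).ne_zero (hc _ _)
      (SetLike.mul_mem_graded (hX t) (hX t'))
  have h₂ : X s * (X t * X t') = (c s t * c s t') • (X t * X t' * X s) := by
    rw [← mul_assoc, hc, smul_mul_assoc, mul_assoc, hc, mul_smul_comm, smul_smul, mul_assoc]
  exact smul_left_injective F (((hXu t).mul (hXu t')).mul (hXu s)).ne_zero (h₁.symm.trans h₂)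

theorem commFactor_add_right_ne (hdim : ∀ t, finrank F (𝒜 t) = 1) (hX : ∀ t, X t ∈ 𝒜 t)
    (hXu : ∀ t, IsUnit (X t)) (hc : ∀ s t, X s * X t = c s t • (X t * X s)) {u s : T}
    (hus : c u s ≠ 1) (t : T) : c s (u + t) ≠ c s t := by
  rw [commFactor_add_right hdim hX hXu hc, Ne, mul_eq_right₀
    (left_ne_zero_of_mul_eq_one (commFactor_mul_swap hXu hc s t))]
  intro hsu
  exact hus (by simpa [hsu] using commFactor_mul_swap hXu hc s u)

theorem commFactor_zero_left (hdim : ∀ t, finrank F (𝒜 t) = 1) (hX : ∀ t, X t ∈ 𝒜 t)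
    (hXu : ∀ t, IsUnit (X t)) (hc : ∀ s t, X s * X t = c s t • (X t * X s)) (s : T) :
    c 0 s = 1 := by
  have h := mul_eq_smul_mul_of_mem_of_finrank_eq_one (hdim 0) (hX 0) (hXu 0).ne_zero (hc s 0)
    (SetLike.one_mem_graded 𝒜)
  rw [mul_one, one_mul] at h
  have hs0 : c s 0 = 1 := smul_left_injective F (hXu s).ne_zero (h.symm.trans (one_smul F _).symm)
  simpa [hs0] using commFactor_mul_swap hXu hc s 0

end CommutationFactor

section Superideal

variable {F T D : Type*} [Field F] [AddCommGroup T] [DecidableEq T] [Fintype T] [Ring D]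
  [Algebra F D] {𝒜 : T → Submodule F D} [GradedAlgebra 𝒜] {X : T → D} {c : T → T → F}

theorem mul_eq_componentScale_commFactor_mul (hdim : ∀ t, finrank F (𝒜 t) = 1)
    (hX : ∀ t, X t ∈ 𝒜 t) (hX0 : ∀ t, X t ≠ 0)
    (hc : ∀ s t, X s * X t = c s t • (X t * X s)) (s : T) (y : D) :
    X s * y = GradedAlgebra.componentScale 𝒜 (c s) y * X s := by
  have : LinearMap.mulLeft F (X s) =
      LinearMap.mulRight F (X s) ∘ₗ GradedAlgebra.componentScale 𝒜 (c s) :=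
    decompose_lhom_ext 𝒜 fun t => LinearMap.ext fun ⟨d, hd⟩ => by
      simp [GradedAlgebra.componentScale_apply_of_mem _ hd,
        mul_eq_smul_mul_of_mem_of_finrank_eq_one (hdim t) (hX t) (hX0 t) (hc s t) hd]
  exact LinearMap.congr_fun this y

theorem commute_of_commFactor_eq_one (hdim : ∀ t, finrank F (𝒜 t) = 1)
    (hX : ∀ t, X t ∈ 𝒜 t) (hX0 : ∀ t, X t ≠ 0)
    (hc : ∀ s t, X s * X t = c s t • (X t * X s)) {u : T} (hu : ∀ t, c u t = 1) (d : D) :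
    Commute (X u) d := by
  have hcu : c u = algebraMap F (T → F) 1 := funext fun t => by simp [hu]
  have h := mul_eq_componentScale_commFactor_mul hdim hX hX0 hc u d
  rwa [hcu, GradedAlgebra.componentScale_algebraMap, one_smul, LinearMap.id_apply] at h

theorem commFactor_mem_scaleStabilizer [Nontrivial D] (hdim : ∀ t, finrank F (𝒜 t) = 1)
    (hX : ∀ t, X t ∈ 𝒜 t) (hXu : ∀ t, IsUnit (X t))
    (hc : ∀ s t, X s * X t = c s t • (X t * X s)) {I : Submodule F D}
    (hI : ∀ r x, x ∈ I → r * x ∈ I ∧ x * r ∈ I) (s : T) :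
    c s ∈ GradedAlgebra.scaleStabilizer 𝒜 I := fun y hy => by
  obtain ⟨v, hv⟩ := hXu s
  have h := mul_eq_componentScale_commFactor_mul hdim hX (fun t => (hXu t).ne_zero) hc s y
  rw [← hv, ← Units.mul_inv_eq_iff_eq_mul] at h
  rw [← h]
  exact (hI _ _ (hI _ _ hy).1).2

theorem exists_ideal_ne_bot_ne_top_of_commute [IsAlgClosed F] [FiniteDimensional F D]
    [Nontrivial D] {f : T → F} {u : T} (hu : u ≠ 0) (hf : ∀ t, f (u + t) = f t) {a : D}
    (ha : a ∈ 𝒜 u) (ha0 : a ≠ 0) (hcomm : ∀ d, Commute a d) :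
    ∃ I : Submodule F D, (∀ r x, x ∈ I → r * x ∈ I ∧ x * r ∈ I) ∧
      (∀ x ∈ I, GradedAlgebra.componentScale 𝒜 f x ∈ I) ∧ I ≠ ⊥ ∧ I ≠ ⊤ := by
  obtain ⟨μ, hμ⟩ := spectrum.nonempty_of_isAlgClosed_of_finiteDimensional F a
  set b := algebraMap F D μ - a with hb
  have hbcomm : ∀ d, Commute b d := fun d =>
    (Algebra.commute_algebraMap_left μ d).sub_left (hcomm d)
  have hb0 : b ≠ 0 := by
    intro h
    have ha' : a ∈ 𝒜 0 := sub_eq_zero.mp h ▸ SetLike.algebraMap_mem_graded 𝒜 μ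
    have := decompose_of_mem_same 𝒜 ha
    rw [decompose_of_mem_ne 𝒜 ha' hu.symm] at this
    exact ha0 this.symm
  refine ⟨LinearMap.range (LinearMap.mulLeft F b), ?_, ?_, ?_, ?_⟩
  · rintro r _ ⟨d, rfl⟩
    exact ⟨⟨r * d, by simp [← mul_assoc, (hbcomm r).eq]⟩, ⟨d * r, by simp [mul_assoc]⟩⟩
  · rintro _ ⟨d, rfl⟩
    refine ⟨GradedAlgebra.componentScale 𝒜 f d, ?_⟩
    simp [hb, sub_mul, Algebra.algebraMap_eq_smul_one,
      GradedAlgebra.componentScale_mul_left_of_mem hf ha]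
  · exact ne_of_mem_of_not_mem' (⟨1, mul_one b⟩ : b ∈ LinearMap.range _) (by simpa using hb0)
  · intro htop
    obtain ⟨d, hd⟩ : (1 : D) ∈ LinearMap.range (LinearMap.mulLeft F b) :=
      htop ▸ Submodule.mem_top
    exact spectrum.mem_iff.mp hμ ⟨⟨b, d, hd, by rw [← (hbcomm d).eq]; exact hd⟩, rfl⟩

end Superideal

section Superalgebra

variable {F T D : Type*} [Field F] [AddCommGroup T] [DecidableEq T] [Fintype T] [Ring D]
  [Algebra F D] [Nontrivial D] {𝒜 : T → Submodule F D} [GradedAlgebra 𝒜] {X : T → D}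
  {c : T → T → F} {p : T → ZMod 2}

theorem eq_zero_of_commFactor_eq_sign [IsAlgClosed F] (h2 : (2 : F) ≠ 0)
    (hdim : ∀ t, finrank F (𝒜 t) = 1) (hX : ∀ t, X t ∈ 𝒜 t) (hXu : ∀ t, IsUnit (X t))
    (hc : ∀ s t, X s * X t = c s t • (X t * X s)) (hp : ∀ a b, p (a + b) = p a + p b)
    (hsimple : ∀ I : Submodule F D, (∀ r x, x ∈ I → r * x ∈ I ∧ x * r ∈ I) →
      (∀ x ∈ I, (∑ t, if p t = 0 then (decompose 𝒜 x t : D) else 0) ∈ I) → I = ⊥ ∨ I = ⊤)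
    {u : T} (hu : ∀ s, c u s = (-1) ^ ((p u).val * (p s).val)) : u = 0 := by
  by_contra hu0
  rcases (by decide : ∀ a : ZMod 2, a = 0 ∨ a = 1) (p u) with hpu | hpu
  · have := fun t => Module.finite_of_finrank_eq_succ (hdim t)
    have := DirectSum.Decomposition.finiteDimensional 𝒜
    obtain ⟨I, hI, hIeven, hbot, htop⟩ := exists_ideal_ne_bot_ne_top_of_commute hu0
      (f := fun t => if p t = 0 then 1 else 0) (fun t => by simp [hp, hpu]) (hX u)
      (hXu u).ne_zero
      (commute_of_commFactor_eq_one hdim hX (fun t => (hXu t).ne_zero) hc fun t => by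
        simp [hu, hpu])
    refine (hsimple I hI fun x hx => ?_).elim hbot htop
    simpa [GradedAlgebra.componentScale_ite_apply] using hIeven x hx
  · have h := commFactor_self hXu hc u
    rw [hu, hpu, ZMod.val_one, mul_one, pow_one] at h
    exact h2 (by linear_combination -h)

theorem isHomogeneous_of_commFactor (hdim : ∀ t, finrank F (𝒜 t) = 1) (hX : ∀ t, X t ∈ 𝒜 t)
    (hXu : ∀ t, IsUnit (X t)) (hc : ∀ s t, X s * X t = c s t • (X t * X s))
    (hp : ∀ a b, p (a + b) = p a + p b) {I : Submodule F D}
    (hI : ∀ r x, x ∈ I → r * x ∈ I ∧ x * r ∈ I)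
    (hIeven : ∀ x ∈ I, (∑ t, if p t = 0 then (decompose 𝒜 x t : D) else 0) ∈ I)
    (hnd : ∀ u ≠ 0, p u = 0 → ∃ s, c u s ≠ 1) : SetLike.IsHomogeneous 𝒜 I := by
  refine GradedAlgebra.isHomogeneous_of_scaleStabilizer_eq_top
    (Subalgebra.eq_top_of_separatesPoints fun t t' htt' => ?_)
  by_cases hpar : p t = p t'
  · obtain ⟨s, hs⟩ := hnd (t - t') (sub_ne_zero.mpr htt')
      (by simpa [hpar] using map_sub (AddMonoidHom.mk' p hp) t t')
    refine ⟨c s, commFactor_mem_scaleStabilizer hdim hX hXu hc hI s, ?_⟩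
    simpa using commFactor_add_right_ne hdim hX hXu hc hs t'
  · refine ⟨fun t => if p t = 0 then 1 else 0, fun x hx => ?_, ?_⟩
    · simpa [GradedAlgebra.componentScale_ite_apply] using hIeven x hx
    · have := (by decide : ∀ a b : ZMod 2, a ≠ b → (a = 0 ↔ b ≠ 0)) _ _ hpar
      by_cases h' : p t' = 0 <;> simp [this, h']

end Superalgebra

/-- Let `D` be a graded-division superalgebra over an algebraically
closed field `F` (`char F ≠ 2`) with one-dimensional homogeneous components `D_t`
spanned by `X_t`, supported on a finite abelian group `T` with parity homomorphism
`p : T → ℤ/2`, and let `β̃` be the skew-symmetric bicharacter defined by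
`X_t X_s = (−1)^{p(t)p(s)} β̃(t,s) X_s X_t`. Then `D` is simple as a superalgebra
(its only superideals are `0` and `D`) iff `β̃` is nondegenerate, i.e. `rad β̃ = {e}`. -/
theorem stmt_19 {F T D : Type*} [Field F] [IsAlgClosed F] (h2 : (2 : F) ≠ 0)
    [AddCommGroup T] [Fintype T] [DecidableEq T]
    [Ring D] [Algebra F D]
    (𝒜 : T → Submodule F D) [GradedAlgebra 𝒜]
    (hdim : ∀ t, Module.finrank F (𝒜 t) = 1)
    (hdiv : ∀ t, ∀ d ∈ 𝒜 t, d ≠ 0 → IsUnit d)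
    (p : T → ZMod 2) (hp : ∀ a b, p (a + b) = p a + p b)
    (X : T → D) (hX : ∀ t, X t ∈ 𝒜 t) (hX0 : ∀ t, X t ≠ 0)
    (βt : T → T → Fˣ)
    (hβt : ∀ t s, X t * X s =
      ((((-1 : Fˣ) ^ ((p t).val * (p s).val) * βt t s : Fˣ) : F)) • (X s * X t)) :
    (((∃ a b : D, a * b ≠ 0) ∧
      ∀ I : Submodule F D,
        (∀ (r x : D), x ∈ I → r * x ∈ I ∧ x * r ∈ I) →
        (∀ x ∈ I, (∑ t : T, if p t = 0 then ((DirectSum.decompose 𝒜 x) t : D) else 0) ∈ I) →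
        I = ⊥ ∨ I = ⊤)
      ↔ {t : T | ∀ s, βt t s = 1} = {0}) := by
  have hXu : ∀ t, IsUnit (X t) := fun t => hdiv t _ (hX t) (hX0 t)
  have : Nontrivial D := ⟨⟨X 0, 0, hX0 0⟩⟩
  set γ : T → T → F := fun t s => (((-1 : Fˣ) ^ ((p t).val * (p s).val) * βt t s : Fˣ) : F)
  have hc : ∀ t s, X t * X s = γ t s • (X s * X t) := hβt
  have hrad : ∀ t s, βt t s = 1 ↔ γ t s = (-1) ^ ((p t).val * (p s).val) := fun t s => by
    simp only [γ, Units.ext_iff, Units.val_mul, Units.val_pow_eq_pow_val, Units.val_neg,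
      Units.val_one]
    rw [mul_eq_left₀ (pow_ne_zero _ (neg_ne_zero.mpr one_ne_zero))]
  constructor
  · rintro ⟨-, hsimple⟩
    refine Set.eq_singleton_iff_unique_mem.mpr ⟨fun s => (hrad 0 s).mpr ?_, fun u hu =>
      eq_zero_of_commFactor_eq_sign h2 hdim hX hXu hc hp hsimple fun s => (hrad u s).mp (hu s)⟩
    rw [show p 0 = 0 from map_zero (AddMonoidHom.mk' p hp), ZMod.val_zero, zero_mul, pow_zero]
    exact commFactor_zero_left hdim hX hXu hc s
  · intro hnd
    refine ⟨⟨1, 1, by simp⟩, fun I hI hIeven => or_iff_not_imp_left.mpr fun hne =>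
      eq_top_of_isHomogeneous hdiv (fun r x hx => (hI r x hx).1)
        (isHomogeneous_of_commFactor hdim hX hXu hc hp hI hIeven fun u hu0 hpu => ?_) hne⟩
    obtain ⟨s, hs⟩ : ∃ s, βt u s ≠ 1 := by
      by_contra! h
      exact hu0 (hnd ▸ h : u ∈ ({0} : Set T))
    exact ⟨s, by simpa [hrad, hpu] using hs⟩
end
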